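/- arXiv:2102.01624 — 3 statements merged into one kernel-verified Lean document; each statement's English description precedes it below -/
import Mathlib

section
/- Let a_1,…,a_M ∈ ℂ^M satisfy ‖a_k‖² = M for all k and ∑_{k=1}^M a_k a_k^H = M·I_M, and let γ_k > 0 for each k with ν = ∑_{k=1}^M 1/√γ_k. Then for every Hermitian positive semidefinite matrix Γ ∈ ℂ^{M×M} with tr(Γ) ≤ 1 and a_k^H Γ a_k > 0 for all k, one has ∑_{k=1}^M 1/(γ_k · a_k^H Γ a_k) ≥ ν² / M. -/
open Matrix
open scoped ComplexOrder

/-! The quadratic forms `qₖ = aₖᴴ Γ aₖ` sum to `tr (Γ ∑ₖ aₖ aₖᴴ) = M tr Γ ≤ M`, and by the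
Cauchy–Schwarz inequality in Sedrakyan's form,
`(∑ₖ 1/√γₖ)² / ∑ₖ qₖ ≤ ∑ₖ (1/√γₖ)² / qₖ = ∑ₖ 1/(γₖ qₖ)`. -/

theorem Matrix.sum_dotProduct_mulVec_eq_mul_trace {ι n R : Type*} [Fintype ι] [Fintype n]
    [DecidableEq n] [CommSemiring R] (u v : ι → n → R) {c : R}
    (h : ∑ k, vecMulVec (u k) (v k) = c • (1 : Matrix n n R)) (A : Matrix n n R) :
    ∑ k, v k ⬝ᵥ A *ᵥ u k = c * A.trace := calc
  ∑ k, v k ⬝ᵥ A *ᵥ u k = ∑ k, (A * vecMulVec (u k) (v k)).trace := by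
    simp only [mul_vecMulVec, trace_vecMulVec, dotProduct_comm]
  _ = (A * ∑ k, vecMulVec (u k) (v k)).trace := by rw [Finset.mul_sum, trace_sum]
  _ = c * A.trace := by rw [h, Matrix.mul_smul, mul_one, trace_smul, smul_eq_mul]

theorem stmt9_general (M : ℕ) (a : Fin M → Fin M → ℂ)
    (horth : ∑ k, vecMulVec (a k) (star (a k)) = (M : ℂ) • (1 : Matrix (Fin M) (Fin M) ℂ))
    (γ : Fin M → ℝ) (hγ : ∀ k, 0 < γ k)
    (Γ : Matrix (Fin M) (Fin M) ℂ) (htr : Γ.trace ≤ 1)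
    (hpos : ∀ k, 0 < (star (a k) ⬝ᵥ Γ.mulVec (a k)).re) :
    (∑ k, 1 / Real.sqrt (γ k)) ^ 2 / (M : ℝ)
      ≤ ∑ k, 1 / (γ k * (star (a k) ⬝ᵥ Γ.mulVec (a k)).re) := by
  rcases Nat.eq_zero_or_pos M with rfl | hM
  · simp
  set q : Fin M → ℝ := fun k => (star (a k) ⬝ᵥ Γ *ᵥ a k).re
  have hsum : ∑ k, q k ≤ M := by
    have hre := congrArg Complex.re (sum_dotProduct_mulVec_eq_mul_trace a (star ∘ a) horth Γ)
    rw [Complex.re_sum, ← Complex.ofReal_natCast, Complex.re_ofReal_mul] at hre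
    calc ∑ k, q k = M * Γ.trace.re := hre
      _ ≤ M := mul_le_of_le_one_right M.cast_nonneg (Complex.le_def.mp htr).1
  have hqpos : 0 < ∑ k, q k :=
    Finset.sum_pos (fun k _ => hpos k) ⟨⟨0, hM⟩, Finset.mem_univ _⟩
  calc (∑ k, 1 / Real.sqrt (γ k)) ^ 2 / (M : ℝ)
      ≤ (∑ k, 1 / Real.sqrt (γ k)) ^ 2 / ∑ k, q k :=
        div_le_div_of_nonneg_left (sq_nonneg _) hqpos hsum
    _ ≤ ∑ k, (1 / Real.sqrt (γ k)) ^ 2 / q k :=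
        Finset.sq_sum_div_le_sum_sq_div _ _ fun k _ => hpos k
    _ = ∑ k, 1 / (γ k * q k) := by
        simp only [div_pow, one_pow, Real.sq_sqrt (hγ _).le, div_div]

/-- Lower bound for the statistical precoding objective: for `M` array responses with
`‖aₖ‖² = M` and `∑ₖ aₖ aₖᴴ = M • I`, gains `γₖ > 0`, and `ν = ∑ₖ 1/√γₖ`, every Hermitian
PSD `Γ` with `tr Γ ≤ 1` and `aₖᴴ Γ aₖ > 0` satisfies
`∑ₖ 1/(γₖ · aₖᴴ Γ aₖ) ≥ ν²/M`. -/
theorem stmt9 (M : ℕ) (a : Fin M → Fin M → ℂ)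
    (hnorm : ∀ k, ∑ i, ‖a k i‖ ^ 2 = (M : ℝ))
    (horth : ∑ k, vecMulVec (a k) (star (a k)) = (M : ℂ) • (1 : Matrix (Fin M) (Fin M) ℂ))
    (γ : Fin M → ℝ) (hγ : ∀ k, 0 < γ k)
    (Γ : Matrix (Fin M) (Fin M) ℂ) (hΓ : Γ.PosSemidef) (htr : Γ.trace ≤ 1)
    (hpos : ∀ k, 0 < (star (a k) ⬝ᵥ Γ.mulVec (a k)).re) :
    (∑ k, 1 / Real.sqrt (γ k)) ^ 2 / (M : ℝ)
      ≤ ∑ k, 1 / (γ k * (star (a k) ⬝ᵥ Γ.mulVec (a k)).re) :=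
  stmt9_general M a horth γ hγ Γ htr hpos
end

section
/- Let a_1,…,a_M ∈ ℂ^M satisfy ‖a_k‖² = M for all k and ∑_{k=1}^M a_k a_k^H = M·I_M, let γ_k > 0, and set ν = ∑_{k=1}^M 1/√γ_k and Γ₁ = (1/(Mν)) ∑_{k=1}^M γ_k^{−1/2} a_k a_k^H. Then Γ₁ is Hermitian positive semidefinite with tr(Γ₁) = 1, a_k^H Γ₁ a_k = M/(ν √γ_k) for every k, and ∑_{k=1}^M 1/(γ_k · a_k^H Γ₁ a_k) = ν²/M; hence Γ₁ is a global minimizer of ∑_{k=1}^M 1/(γ_k · a_k^H Γ a_k) over Hermitian positive semidefinite Γ with tr(Γ) ≤ 1. -/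
/-!
Since `∑ⱼ aⱼ aⱼᴴ = M I` and `‖aₖ‖² = M`, Parseval forces the `aₖ` to be pairwise orthogonal,
so `aₖᴴ Γ₁ aₖ` only sees the `k`-th summand of `Γ₁` and equals `M / (ν √γₖ)`; the objective
value `ν² / M` follows. For a feasible `Γ`, the quadratic forms `xₖ = aₖᴴ Γ aₖ` add up to
`tr (Γ ∑ₖ aₖ aₖᴴ) = M tr Γ ≤ M`, and Cauchy–Schwarz in Engel form gives
`∑ₖ 1 / (γₖ xₖ) ≥ (∑ₖ γₖ^{-1/2})² / ∑ₖ xₖ ≥ ν² / M`.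
-/

open Matrix Finset
open scoped ComplexOrder

section FrameIdentities

variable {n ι : Type*} [Fintype n] [Fintype ι]

lemma dotProduct_star_self_eq_sum_norm_sq (v : n → ℂ) :
    star v ⬝ᵥ v = ((∑ i, ‖v i‖ ^ 2 : ℝ) : ℂ) := by
  push_cast
  refine sum_congr rfl fun i _ => ?_
  rw [Pi.star_apply, Complex.star_def, mul_comm, Complex.mul_conj, Complex.normSq_eq_norm_sq]
  push_cast; rfl

lemma star_dotProduct_vecMulVec_self_star_mulVec (x u : n → ℂ) :
    star x ⬝ᵥ vecMulVec u (star u) *ᵥ x = (Complex.normSq (star x ⬝ᵥ u) : ℂ) := by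
  rw [vecMulVec_mulVec, op_smul_eq_smul, dotProduct_smul, star_dotProduct, smul_eq_mul,
    Complex.star_def, mul_comm, Complex.mul_conj]

lemma star_dotProduct_sum_smul_vecMulVec_mulVec (w : ι → ℝ) (v : ι → n → ℂ) (x : n → ℂ) :
    star x ⬝ᵥ (∑ j, w j • vecMulVec (v j) (star (v j))) *ᵥ x
      = ((∑ j, w j * Complex.normSq (star x ⬝ᵥ v j) : ℝ) : ℂ) := by
  simp only [sum_mulVec, dotProduct_sum, smul_mulVec, dotProduct_smul,
    star_dotProduct_vecMulVec_self_star_mulVec]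
  push_cast
  simp [Complex.real_smul]

lemma sum_star_dotProduct_mulVec_eq_trace_mul (A : Matrix n n ℂ) (v : ι → n → ℂ) :
    ∑ k, star (v k) ⬝ᵥ A *ᵥ v k = (A * ∑ k, vecMulVec (v k) (star (v k))).trace := by
  simp only [mul_sum, trace_sum, mul_vecMulVec, trace_vecMulVec, dotProduct_comm]

lemma star_dotProduct_eq_zero_of_sum_vecMulVec_eq_smul_one [DecidableEq n]
    {v : ι → n → ℂ} {c : ℝ} (hframe : ∑ j, vecMulVec (v j) (star (v j)) = (c : ℂ) • 1)
    (hnorm : ∀ k, star (v k) ⬝ᵥ v k = c) {j k : ι} (hjk : j ≠ k) :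
    star (v k) ⬝ᵥ v j = 0 := by
  -- Parseval for the tight frame: `∑ᵢ |⟨vₖ, vᵢ⟩|² = c²`, already exhausted by the term `i = k`.
  have hsum : ∑ i, Complex.normSq (star (v k) ⬝ᵥ v i) = c ^ 2 := by
    have h := star_dotProduct_sum_smul_vecMulVec_mulVec (fun _ => (1 : ℝ)) v (v k)
    simp only [one_smul, one_mul, hframe, smul_mulVec, one_mulVec, dotProduct_smul, hnorm,
      smul_eq_mul] at h
    rw [sq]
    exact_mod_cast h.symm
  classical
  have hpair := sum_le_sum_of_subset_of_nonneg (subset_univ {j, k})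
    fun i _ _ => Complex.normSq_nonneg (star (v k) ⬝ᵥ v i)
  rw [sum_pair hjk, hsum, hnorm, Complex.normSq_ofReal, ← sq] at hpair
  exact Complex.normSq_eq_zero.mp (le_antisymm (by linarith) (Complex.normSq_nonneg _))

lemma star_dotProduct_sum_smul_vecMulVec_mulVec_of_orthogonal (w : ι → ℝ)
    {v : ι → n → ℂ} {c : ℝ} (horth : ∀ j k, j ≠ k → star (v k) ⬝ᵥ v j = 0)
    (hnorm : ∀ k, star (v k) ⬝ᵥ v k = c) (k : ι) :
    star (v k) ⬝ᵥ (∑ j, w j • vecMulVec (v j) (star (v j))) *ᵥ v k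
      = ((w k * c ^ 2 : ℝ) : ℂ) := by
  rw [star_dotProduct_sum_smul_vecMulVec_mulVec, sum_eq_single k, hnorm,
    Complex.normSq_ofReal, sq]
  · intro j _ hjk
    rw [horth j k hjk, map_zero, mul_zero]
  · exact fun h => absurd (mem_univ k) h

end FrameIdentities

section ObjectiveBounds

variable {ι : Type*} [Fintype ι] {γ : ι → ℝ}

lemma sum_one_div_mul_div_mul_sqrt (hγ : ∀ k, 0 < γ k) (ν c : ℝ) :
    ∑ k, 1 / (γ k * (c / (ν * √(γ k)))) = ν / c * ∑ k, 1 / √(γ k) := by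
  rw [mul_sum]
  refine sum_congr rfl fun k _ => ?_
  have hs : 0 < √(γ k) := Real.sqrt_pos.2 (hγ k)
  nth_rw 1 [← Real.mul_self_sqrt (hγ k).le]
  field_simp

lemma sq_sum_one_div_sqrt_div_le_sum_one_div_mul [Nonempty ι] (hγ : ∀ k, 0 < γ k)
    {x : ι → ℝ} (hx : ∀ k, 0 < x k) {S : ℝ} (hS : ∑ k, x k ≤ S) :
    (∑ k, 1 / √(γ k)) ^ 2 / S ≤ ∑ k, 1 / (γ k * x k) := calc
  (∑ k, 1 / √(γ k)) ^ 2 / S ≤ (∑ k, 1 / √(γ k)) ^ 2 / ∑ k, x k :=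
    div_le_div_of_nonneg_left (sq_nonneg _) (sum_pos (fun k _ => hx k) univ_nonempty) hS
  _ ≤ ∑ k, (1 / √(γ k)) ^ 2 / x k := sq_sum_div_le_sum_sq_div _ _ fun k _ => hx k
  _ = ∑ k, 1 / (γ k * x k) := by
    simp only [div_pow, one_pow, Real.sq_sqrt (hγ _).le, div_div]

end ObjectiveBounds

/-- Closed-form optimal statistical transmit covariance (Proposition 2): with mutually
orthogonal array responses `aₖ` (`‖aₖ‖² = M`, `∑ₖ aₖ aₖᴴ = M • I`), gains `γₖ > 0`,
`ν = ∑ₖ 1/√γₖ`, and `Γ₁ = (1/(Mν)) ∑ₖ γₖ^{-1/2} aₖ aₖᴴ`, the matrix `Γ₁` is Hermitian PSD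
with `tr Γ₁ = 1`, `aₖᴴ Γ₁ aₖ = M/(ν √γₖ)`, the objective value is `ν²/M`, and `Γ₁` is a
global minimizer of `∑ₖ 1/(γₖ · aₖᴴ Γ aₖ)` over Hermitian PSD `Γ` with `tr Γ ≤ 1`. -/
theorem stmt10 (M : ℕ) (a : Fin M → Fin M → ℂ)
    (hnorm : ∀ k, ∑ i, ‖a k i‖ ^ 2 = (M : ℝ))
    (horth : ∑ k, vecMulVec (a k) (star (a k)) = (M : ℂ) • (1 : Matrix (Fin M) (Fin M) ℂ))
    (hM : 1 ≤ M) (γ : Fin M → ℝ) (hγ : ∀ k, 0 < γ k)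
    (ν : ℝ) (hν : ν = ∑ k, 1 / Real.sqrt (γ k))
    (Γ₁ : Matrix (Fin M) (Fin M) ℂ)
    (hΓ₁ : Γ₁ = (1 / ((M : ℝ) * ν)) •
      ∑ k, (1 / Real.sqrt (γ k)) • vecMulVec (a k) (star (a k))) :
    Γ₁.PosSemidef
    ∧ Γ₁.trace = 1
    ∧ (∀ k, star (a k) ⬝ᵥ Γ₁.mulVec (a k) = (((M : ℝ) / (ν * Real.sqrt (γ k)) : ℝ) : ℂ))
    ∧ (∑ k, 1 / (γ k * (star (a k) ⬝ᵥ Γ₁.mulVec (a k)).re) = ν ^ 2 / (M : ℝ))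
    ∧ (∀ Γ : Matrix (Fin M) (Fin M) ℂ, Γ.PosSemidef → Γ.trace ≤ 1 →
        (∀ k, 0 < (star (a k) ⬝ᵥ Γ.mulVec (a k)).re) →
        ∑ k, 1 / (γ k * (star (a k) ⬝ᵥ Γ₁.mulVec (a k)).re)
          ≤ ∑ k, 1 / (γ k * (star (a k) ⬝ᵥ Γ.mulVec (a k)).re)) := by
  have hM0 : (0 : ℝ) < M := by exact_mod_cast hM
  have : Nonempty (Fin M) := ⟨⟨0, hM⟩⟩
  have hν0 : 0 < ν := hν ▸ sum_pos (fun k _ => by have := hγ k; positivity) univ_nonempty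
  have hnorm' : ∀ k, star (a k) ⬝ᵥ a k = (M : ℝ) := fun k => by
    rw [dotProduct_star_self_eq_sum_norm_sq, hnorm]
  have hframe : ∑ k, vecMulVec (a k) (star (a k)) = ((M : ℝ) : ℂ) • 1 := by
    rw [horth, Complex.ofReal_natCast]
  have horthogonal : ∀ j k, j ≠ k → star (a k) ⬝ᵥ a j = 0 := fun j k hjk =>
    star_dotProduct_eq_zero_of_sum_vecMulVec_eq_smul_one hframe hnorm' hjk
  have hquad : ∀ k, star (a k) ⬝ᵥ Γ₁.mulVec (a k) = (((M : ℝ) / (ν * √(γ k)) : ℝ) : ℂ) := by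
    intro k
    rw [hΓ₁, smul_mulVec, dotProduct_smul, Complex.real_smul,
      star_dotProduct_sum_smul_vecMulVec_mulVec_of_orthogonal _ horthogonal hnorm']
    have := Real.sqrt_pos.2 (hγ k)
    push_cast
    field_simp
  have hobj : ∑ k, 1 / (γ k * (star (a k) ⬝ᵥ Γ₁.mulVec (a k)).re) = ν ^ 2 / (M : ℝ) := by
    simp only [hquad, Complex.ofReal_re]
    rw [sum_one_div_mul_div_mul_sqrt hγ, ← hν]
    ring
  refine ⟨?_, ?_, hquad, hobj, fun Γ _ htr hpos => hobj ▸ ?_⟩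
  · rw [hΓ₁]
    exact (posSemidef_sum _ fun k _ =>
      (posSemidef_vecMulVec_self_star (a k)).smul (by have := hγ k; positivity)).smul
      (by positivity)
  · rw [hΓ₁, trace_smul, trace_sum]
    simp only [trace_smul, trace_vecMulVec, dotProduct_comm _ (star _), hnorm']
    rw [← sum_smul, ← hν, smul_smul, Complex.real_smul]
    push_cast
    field_simp
  · refine hν ▸ sq_sum_one_div_sqrt_div_le_sum_one_div_mul hγ hpos ?_
    have htrace : ∑ k, star (a k) ⬝ᵥ Γ *ᵥ a k = (M : ℂ) * Γ.trace := by
      rw [sum_star_dotProduct_mulVec_eq_trace_mul, horth, Matrix.mul_smul, Matrix.mul_one,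
        trace_smul, smul_eq_mul]
    rw [← Complex.re_sum, htrace, ← Complex.ofReal_natCast, Complex.re_ofReal_mul]
    exact mul_le_of_le_one_right hM0.le (by simpa using Complex.re_le_re htr)
end

section
/- Let a, b, d > 0 and c > 1, and define f(K) = log₂(1 + √(a·(K−1)·(K/c) / (b + d·K·(1 − 1/c)))) for K > 1. Then lim_{K→∞} f(K)/log₂(K) = 1/2. -/
open Filter Topology Real

/-!
The argument of the logarithm behaves like `√L · √K` with `L = a / (d (c - 1))`: indeed the
radicand `g K` grows linearly, `g K / K → L`. Hence `log (1 + √(g K)) = ½ log K + O(1)`, and dividing by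
`log K` gives the limit `½`.
-/

lemma tendsto_log_div_log_of_tendsto_div_rpow {u : ℝ → ℝ} {p L : ℝ} (hL : 0 < L)
    (hu : Tendsto (fun x => u x / x ^ p) atTop (𝓝 L)) :
    Tendsto (fun x => log (u x) / log x) atTop (𝓝 p) := by
  have hlog : Tendsto (fun x => log (u x / x ^ p) / log x) atTop (𝓝 0) := by
    simpa only [div_eq_mul_inv, mul_zero, Function.comp_def] using
      ((continuousAt_log hL.ne').tendsto.comp hu).mul
        (tendsto_inv_atTop_zero.comp tendsto_log_atTop)
  refine (zero_add p ▸ hlog.add_const p).congr' ?_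
  filter_upwards [eventually_gt_atTop 1, hu.eventually (lt_mem_nhds hL)] with x hx hux
  have hx0 : 0 < x := one_pos.trans hx
  have hxp : 0 < x ^ p := rpow_pos_of_pos hx0 p
  have hux0 : 0 < u x := (div_pos_iff_of_pos_right hxp).mp hux
  rw [log_div hux0.ne' hxp.ne', log_rpow hx0, sub_div, mul_div_cancel_right₀ _ (log_pos hx).ne',
    sub_add_cancel]

lemma tendsto_one_add_sqrt_div_sqrt {g : ℝ → ℝ} {L : ℝ}
    (hg : Tendsto (fun x => g x / x) atTop (𝓝 L)) :
    Tendsto (fun x => (1 + √(g x)) / x ^ (1 / 2 : ℝ)) atTop (𝓝 √L) := by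
  have hinv : Tendsto (fun x => 1 / √x) atTop (𝓝 0) := by
    simpa only [one_div, Function.comp_def] using tendsto_inv_atTop_zero.comp tendsto_sqrt_atTop
  refine (zero_add √L ▸ hinv.add (continuous_sqrt.tendsto L |>.comp hg)).congr' ?_
  filter_upwards [eventually_ge_atTop 0] with x hx
  rw [← sqrt_eq_rpow, add_div, Function.comp_apply, sqrt_div' _ hx]

lemma tendsto_quadratic_div_affine_div_self (a b c d e : ℝ) (hc : c ≠ 0) (hde : d * e ≠ 0) :
    Tendsto (fun x => a * (x - 1) * (x / c) / (b + d * x * e) / x) atTop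
      (𝓝 (a / c / (d * e))) := by
  have hinv : Tendsto (fun x : ℝ => x⁻¹) atTop (𝓝 0) := tendsto_inv_atTop_zero
  have hnum : Tendsto (fun x : ℝ => a * (1 - x⁻¹) / c) atTop (𝓝 (a / c)) := by
    simpa using (((tendsto_const_nhds (x := (1 : ℝ))).sub hinv).const_mul a).div_const c
  have hden : Tendsto (fun x : ℝ => b * x⁻¹ + d * e) atTop (𝓝 (d * e)) := by
    simpa using (hinv.const_mul b).add_const (d * e)
  refine (hnum.div hden hde).congr' ?_
  filter_upwards [eventually_gt_atTop 0] with x hx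
  simp only [Pi.div_apply]
  field_simp

theorem stmt15_general (a b c d : ℝ) (ha : 0 < a) (hc : 1 < c) (hd : 0 < d) :
    Tendsto (fun K : ℝ =>
        Real.logb 2 (1 + Real.sqrt (a * (K - 1) * (K / c) / (b + d * K * (1 - 1 / c))))
          / Real.logb 2 K)
      atTop (nhds (1 / 2)) := by
  have hc0 : 0 < c := one_pos.trans hc
  have hcc : 0 < 1 - 1 / c := sub_pos.mpr ((div_lt_one hc0).mpr hc)
  have hL : 0 < a / c / (d * (1 - 1 / c)) := by positivity
  have hgrowth := tendsto_quadratic_div_affine_div_self a b c d (1 - 1 / c) hc0.ne'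
    (mul_pos hd hcc).ne'
  have key := tendsto_log_div_log_of_tendsto_div_rpow (sqrt_pos.mpr hL)
    (tendsto_one_add_sqrt_div_sqrt hgrowth)
  simpa only [logb, div_div_div_cancel_right₀ (log_pos one_lt_two).ne'] using key

/-- Asymptotics for proportionally growing antennas (`M = K/c`, `c > 1`): with
`f(K) = log₂(1 + √(a(K-1)(K/c)/(b + dK(1 - 1/c))))`, one has `f(K)/log₂ K → 1/2`. -/
theorem stmt15 (a b c d : ℝ) (ha : 0 < a) (hb : 0 < b) (hc : 1 < c) (hd : 0 < d) :
    Tendsto (fun K : ℝ =>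
        Real.logb 2 (1 + Real.sqrt (a * (K - 1) * (K / c) / (b + d * K * (1 - 1 / c))))
          / Real.logb 2 K)
      atTop (nhds (1 / 2)) :=
  stmt15_general a b c d ha hc hd
end
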